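/- arXiv:1402.1875 — 4 statements merged into one kernel-verified Lean document; each statement's English description precedes it below -/
import Mathlib

section
/- Let X be a metric space, A ⊆ X a subset, (δ_i)_{i∈ℕ} a sequence of positive real numbers, and {V'_i}_{i∈ℕ} a cover of A by sets that are open in the subspace A with diam(V'_i) < δ_i for every i. Then there exists a family {V_i}_{i∈ℕ} of sets open in X that covers A such that for every i one has V_i ∩ A = V'_i and diam(V_i) < 2δ_i, and the two families have the same nerve, i.e. for every finite set S of indices, ⋂_{i∈S} V_i ≠ ∅ if and only if ⋂_{i∈S} V'_i ≠ ∅. -/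
/-!
Each `V' i` is thickened inside `X` by balls centred at its points `a`, the ball at `a` having
radius at most half the distance from `a` to `A \ V' i`. Then no new point of `A` is captured,
and the diameter grows by at most the radius bound on each side. For the nerve, if `x` lies in
the thickenings of `V' i`, `i ∈ S`, via centres `a i`, then the centre `a j` that is deepest
inside its own set satisfies `d(a i, a j) ≤ d(a i, x) + d(x, a j) < d(a i, A \ V' i)`, so `a j`
lies in every `V' i`.
-/

open ENNReal NNReal Set Metric

namespace Metric

variable {X : Type*} [PseudoEMetricSpace X]

def relThickening (A U : Set X) (r : ℝ≥0) : Set X :=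
  ⋃ a ∈ U, eball a (min r (infEDist a (A \ U) / 2))

variable {A U : Set X} {r : ℝ≥0}

theorem mem_relThickening_iff {x : X} :
    x ∈ relThickening A U r ↔
      ∃ a ∈ U, edist x a < min (r : ℝ≥0∞) (infEDist a (A \ U) / 2) := by
  simp only [relThickening, mem_iUnion₂, mem_eball, exists_prop]

theorem isOpen_relThickening : IsOpen (relThickening A U r) :=
  isOpen_biUnion fun _ _ => isOpen_eball

theorem relThickening_subset_thickening : relThickening A U r ⊆ thickening r U := by
  intro x hx
  obtain ⟨a, ha, hxa⟩ := mem_relThickening_iff.1 hx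
  rw [mem_thickening_iff_exists_edist_lt, ofReal_coe_nnreal]
  exact ⟨a, ha, hxa.trans_le (min_le_left _ _)⟩

theorem ediam_relThickening_le : ediam (relThickening A U r) ≤ ediam U + 2 * r :=
  (ediam_mono relThickening_subset_thickening).trans (ediam_thickening_le r)

theorem mem_of_edist_lt_infEDist_diff {a b : X} (hb : b ∈ A)
    (hab : edist a b < infEDist a (A \ U)) : b ∈ U := by
  by_contra hbU
  exact (infEDist_le_edist_of_mem (show b ∈ A \ U from ⟨hb, hbU⟩)).not_gt hab

theorem relThickening_inter_subset : relThickening A U r ∩ A ⊆ U := by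
  rintro x ⟨hx, hxA⟩
  obtain ⟨a, -, hxa⟩ := mem_relThickening_iff.1 hx
  refine mem_of_edist_lt_infEDist_diff (a := a) hxA ?_
  rw [edist_comm]
  calc edist x a < infEDist a (A \ U) / 2 := hxa.trans_le (min_le_right _ _)
    _ ≤ infEDist a (A \ U) := ENNReal.half_le_self

theorem infEDist_diff_pos_of_isOpen {W : Set X} (hW : IsOpen W) (hU : U = W ∩ A) {a : X}
    (ha : a ∈ U) : 0 < infEDist a (A \ U) := by
  rw [infEDist_pos_iff_notMem_closure]
  have hsub : A \ U ⊆ Wᶜ := fun y hy hyW => hy.2 (hU ▸ ⟨hyW, hy.1⟩)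
  exact fun hc => closure_minimal hsub hW.isClosed_compl hc (hU ▸ ha).1

theorem subset_relThickening (hU : ∃ W, IsOpen W ∧ U = W ∩ A) (hr : 0 < r) :
    U ⊆ relThickening A U r := by
  obtain ⟨W, hW, rfl⟩ := hU
  intro a ha
  refine mem_biUnion ha (mem_eball_self (lt_min (by exact_mod_cast hr) ?_))
  exact ENNReal.half_pos (infEDist_diff_pos_of_isOpen hW rfl ha).ne'

theorem relThickening_inter_eq (hUA : U ⊆ A) (hU : ∃ W, IsOpen W ∧ U = W ∩ A) (hr : 0 < r) :
    relThickening A U r ∩ A = U :=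
  relThickening_inter_subset.antisymm fun _ ha => ⟨subset_relThickening hU hr ha, hUA ha⟩

theorem nonempty_biInter_of_relThickening {ι : Type*} {U : ι → Set X} {r : ι → ℝ≥0}
    (hUA : ∀ i, U i ⊆ A) {S : Finset ι}
    (h : (⋂ i ∈ S, relThickening A (U i) (r i)).Nonempty) : (⋂ i ∈ S, U i).Nonempty := by
  obtain ⟨x, hx⟩ := h
  rcases S.eq_empty_or_nonempty with rfl | hS
  · exact ⟨x, by simp⟩
  have hcenter : ∀ i ∈ S, ∃ a ∈ U i, edist x a < min (r i : ℝ≥0∞) (infEDist a (A \ U i) / 2) :=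
    fun i hi => mem_relThickening_iff.1 (mem_iInter₂.1 hx i hi)
  have : Nonempty X := ⟨x⟩
  choose! a haU hxa using hcenter
  obtain ⟨j, hjS, hj⟩ := S.exists_min_image (fun i => infEDist (a i) (A \ U i)) hS
  refine ⟨a j, mem_iInter₂.2 fun i hi => ?_⟩
  refine mem_of_edist_lt_infEDist_diff (a := a i) (hUA j (haU j hjS)) ?_
  have hxi : edist (a i) x < infEDist (a i) (A \ U i) / 2 := by
    rw [edist_comm]; exact (hxa i hi).trans_le (min_le_right _ _)
  have hxj : edist x (a j) < infEDist (a i) (A \ U i) / 2 :=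
    (hxa j hjS).trans_le ((min_le_right _ _).trans (ENNReal.div_le_div_right (hj i hi) 2))
  calc edist (a i) (a j) ≤ edist (a i) x + edist x (a j) := edist_triangle _ _ _
    _ < infEDist (a i) (A \ U i) / 2 + infEDist (a i) (A \ U i) / 2 :=
      ENNReal.add_lt_add hxi hxj
    _ = infEDist (a i) (A \ U i) := ENNReal.add_halves _

end Metric

/-- Let `X` be a metric space, `A ⊆ X`, `(δ i)` positive reals, and
`V' i` a countable cover of `A` by sets open in the subspace `A` with `diam (V' i) < δ i`.
Then there is a family `V i` of sets open in `X` covering `A` with `V i ∩ A = V' i`,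
`diam (V i) < 2 * δ i`, and having the same nerve as `V'`. -/
theorem nerve_extension {X : Type*} [MetricSpace X] (A : Set X)
    (δ : ℕ → ℝ) (hδ : ∀ i, 0 < δ i)
    (V' : ℕ → Set X)
    (hV'A : ∀ i, V' i ⊆ A)
    (hV'open : ∀ i, ∃ W : Set X, IsOpen W ∧ V' i = W ∩ A)
    (hV'cover : A ⊆ ⋃ i, V' i)
    (hV'diam : ∀ i, EMetric.diam (V' i) < ENNReal.ofReal (δ i)) :
    ∃ V : ℕ → Set X,
      (∀ i, IsOpen (V i)) ∧
      A ⊆ ⋃ i, V i ∧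
      (∀ i, V i ∩ A = V' i) ∧
      (∀ i, EMetric.diam (V i) < ENNReal.ofReal (2 * δ i)) ∧
      (∀ S : Finset ℕ, (⋂ i ∈ S, V i).Nonempty ↔ (⋂ i ∈ S, V' i).Nonempty) := by
  set r : ℕ → ℝ≥0 := fun i => (δ i / 2).toNNReal
  have hr : ∀ i, 0 < r i := fun i => Real.toNNReal_pos.2 (half_pos (hδ i))
  have hsub : ∀ i, V' i ⊆ relThickening A (V' i) (r i) := fun i =>
    subset_relThickening (hV'open i) (hr i)
  refine ⟨fun i => relThickening A (V' i) (r i), fun i => isOpen_relThickening,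
    hV'cover.trans (iUnion_mono hsub),
    fun i => relThickening_inter_eq (hV'A i) (hV'open i) (hr i),
    fun i => ?_, fun S => ⟨nonempty_biInter_of_relThickening hV'A, fun h => h.mono ?_⟩⟩
  · have h2r : 2 * (r i : ℝ≥0∞) = ENNReal.ofReal (δ i) := by
      rw [← ENNReal.ofReal_ofNat, ← ofReal_coe_nnreal, Real.coe_toNNReal _ (half_pos (hδ i)).le,
        ← ENNReal.ofReal_mul zero_le_two]
      ring_nf
    calc ediam (relThickening A (V' i) (r i)) ≤ ediam (V' i) + 2 * r i := ediam_relThickening_le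
      _ < ENNReal.ofReal (δ i) + ENNReal.ofReal (δ i) := by
        rw [h2r]; exact ENNReal.add_lt_add_right ofReal_ne_top (hV'diam i)
      _ = ENNReal.ofReal (2 * δ i) := by
        rw [two_mul, ENNReal.ofReal_add (hδ i).le (hδ i).le]
  · exact iInter₂_mono fun i _ => hsub i
end

section
/- Every bounded metric space X can be embedded as a closed subset of a convex subset of a Banach space: there exist a real Banach space E, a convex subset C ⊆ E, and an isometric embedding j : X → E such that j(X) ⊆ C and j(X) is closed in the subspace C. -/
/-!
Send `x` to the function `dist x ·`, which is bounded because `X` is, into the Banach space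
`X →ᵇ ℝ`; this is an isometry, and we take `C` to be the convex hull of its image. A point `c`
of `C` is a convex combination of such functions, all nonnegative, so it dominates
`w • dist a ·` for some `a` and some `w > 0`. If `c` is also a limit of images `dist x ·`, then
`c x` is small, hence so is `dist a x`, which forces `c = dist a ·`.
-/

open Set Metric BoundedContinuousFunction

namespace BoundedContinuousFunction

variable {X : Type*} [PseudoMetricSpace X]

noncomputable def distFrom [BoundedSpace X] (a : X) : X →ᵇ ℝ :=
  mkOfBound ⟨dist a, continuous_const.dist continuous_id⟩ (diam (univ : Set X)) fun y z =>
    (dist_dist_dist_le_right a y z).trans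
      (dist_le_diam_of_mem BoundedSpace.bounded_univ (mem_univ y) (mem_univ z))

@[simp]
theorem distFrom_apply [BoundedSpace X] (a y : X) : distFrom a y = dist a y := rfl

theorem isometry_distFrom [BoundedSpace X] : Isometry (distFrom : X → X →ᵇ ℝ) := by
  refine Isometry.of_dist_eq fun x y => le_antisymm ?_ ?_
  · exact (dist_le dist_nonneg).2 fun z => dist_dist_dist_le_left x y z
  · calc dist x y = dist (distFrom x y) (distFrom y y) := by simp
      _ ≤ dist (distFrom x) (distFrom y) := dist_coe_le_dist y

theorem convex_setOf_exists_pos_mul_dist_le :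
    Convex ℝ {c : X →ᵇ ℝ | ∃ a : X, ∃ w > 0, ∀ y, w * dist a y ≤ c y} := by
  intro c hc d hd s t hs ht hst
  rcases hs.eq_or_lt with rfl | hs
  · obtain rfl : t = 1 := by simpa using hst
    simpa using hd
  obtain ⟨a, w, hw, ha⟩ := hc
  obtain ⟨b, v, hv, hb⟩ := hd
  refine ⟨a, s * w, mul_pos hs hw, fun y => ?_⟩
  have hdy : 0 ≤ d y := (mul_nonneg hv.le dist_nonneg).trans (hb y)
  calc s * w * dist a y = s * (w * dist a y) := mul_assoc _ _ _
    _ ≤ s * c y := by gcongr; exact ha y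
    _ ≤ s * c y + t * d y := le_add_of_nonneg_right (mul_nonneg ht hdy)
    _ = (s • c + t • d) y := by simp

theorem exists_pos_mul_dist_le_of_mem_convexHull [BoundedSpace X] {c : X →ᵇ ℝ}
    (hc : c ∈ convexHull ℝ (range distFrom)) :
    ∃ a : X, ∃ w > 0, ∀ y, w * dist a y ≤ c y :=
  convexHull_min (range_subset_iff.2 fun a => by exact ⟨a, 1, one_pos, by simp⟩)
    convex_setOf_exists_pos_mul_dist_le hc

theorem convexHull_inter_closure_range_distFrom_subset [BoundedSpace X] :
    convexHull ℝ (range distFrom) ∩ closure (range distFrom) ⊆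
      range (distFrom : X → X →ᵇ ℝ) := by
  rintro c ⟨hc, hc_cl⟩
  obtain ⟨a, w, hw, ha⟩ := exists_pos_mul_dist_le_of_mem_convexHull hc
  refine ⟨a, eq_of_forall_dist_le fun ε hε => ?_⟩
  obtain ⟨_, ⟨x, rfl⟩, hx⟩ := mem_closure_iff.1 hc_cl (min (ε / 2) (w * (ε / 2)))
    (by positivity)
  have hcx : c x ≤ dist c (distFrom x) := by
    have := dist_coe_le_dist (f := c) (g := distFrom x) x
    rw [distFrom_apply, dist_self, Real.dist_eq, sub_zero] at this
    exact (le_abs_self _).trans this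
  have hax : dist a x < ε / 2 :=
    lt_of_mul_lt_mul_left ((ha x).trans_lt (hcx.trans_lt (hx.trans_le (min_le_right _ _))))
      hw.le
  calc dist (distFrom a) c ≤ dist (distFrom a) (distFrom x) + dist c (distFrom x) :=
        dist_triangle_right _ _ _
    _ = dist a x + dist c (distFrom x) := by rw [isometry_distFrom.dist_eq]
    _ ≤ ε := by linarith [min_le_left (ε / 2) (w * (ε / 2))]

end BoundedContinuousFunction

/-- Eilenberg–Kuratowski–Wojdyslawski. Every bounded metric space `X`
embeds isometrically as a closed subset of a convex subset of a real Banach space. -/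
theorem bounded_metric_embeds_closed_in_convex_subset_of_banach
    {X : Type u} [MetricSpace X] (hX : Bornology.IsBounded (Set.univ : Set X)) :
    ∃ (E : Type u) (_ : NormedAddCommGroup E) (_ : NormedSpace ℝ E) (_ : CompleteSpace E)
      (C : Set E) (j : X → E),
      Convex ℝ C ∧
      (∀ x y : X, ‖j x - j y‖ = dist x y) ∧
      Set.range j ⊆ C ∧
      IsClosed {c : C | (c : E) ∈ Set.range j} := by
  have : BoundedSpace X := Bornology.isBounded_univ.1 hX
  refine ⟨X →ᵇ ℝ, inferInstance, inferInstance, inferInstance,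
    convexHull ℝ (range distFrom), distFrom, convex_convexHull ℝ _, fun x y => ?_,
    subset_convexHull ℝ _, ?_⟩
  · rw [← dist_eq_norm, isometry_distFrom.dist_eq]
  · refine isClosed_preimage_val.2 ?_
    rw [inter_eq_right.2 (subset_convexHull ℝ _)]
    exact convexHull_inter_closure_range_distFrom_subset
end

section
/- (Modified Walsh Lemma) Let X be a metric space, A a subset of X, K a metric ANR, and f : A → K a continuous map. Then for any function ε : K → (0,∞) (not necessarily continuous) there exist a set U open in X with A ⊆ U and a continuous map g : U → K such that: (1) for every u ∈ U there exists a_u ∈ A with d(g(u), f(a_u)) ≤ ε(f(a_u)); and (2) the restriction g|_A is homotopic to f. -/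
universe u

/-- A metrizable topological space `K` is a *metric ANR* if for every metrizable space `Z`
and every closed embedding `e : K → Z`, some open neighborhood of the image of `e` in `Z`
retracts onto the image of `e`. -/
def IsMetricANR (K : Type u) [TopologicalSpace K] : Prop :=
  TopologicalSpace.MetrizableSpace K ∧
  ∀ (Z : Type u) [TopologicalSpace Z], TopologicalSpace.MetrizableSpace Z →
    ∀ e : K → Z, Topology.IsClosedEmbedding e →
      ∃ (U : Set Z), IsOpen U ∧ Set.range e ⊆ U ∧
        ∃ r : C(U, Z), (∀ u : U, r u ∈ Set.range e) ∧
          ∀ (k : K) (h : e k ∈ U), r ⟨e k, h⟩ = e k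

/-!
Embed `K` into the Banach space `K →ᵇ ℝ` by `e k = min (dist · k) 1`. A point of the convex hull
`C` of `e(K)` dominates a positive multiple of some `e k`, which vanishes only at `k`; hence `e(K)`
is closed in `C`, and the ANR property gives a retraction `r` onto `K` defined on a relatively
open `C ∩ O ⊇ e(K)`.

Cover `A` by balls `B(a, δ a)` on which `f` varies little and attach to each point of their union
a ball of almost maximal radius containing it. Nearby points then get centres whose `f`-values
are close, so a partition of unity glues the constants `e (f b)` into a continuous `g₀ : U → C`
that stays near `e (f b)`, and `g = r ∘ g₀`. On `A`, the segment from `g₀` to `e ∘ f` lies in a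
small convex ball of `C` inside the domain of `r`, which yields the homotopy.
-/

open Set Metric Topology

namespace ContinuousMap

variable {Y E K : Type*} [TopologicalSpace Y] [AddCommGroup E] [TopologicalSpace E]
  [IsTopologicalAddGroup E] [Module ℝ E] [ContinuousSMul ℝ E] [TopologicalSpace K]

theorem Homotopic.of_segment_subset {S : Set E} {r : E → K} (hr : ContinuousOn r S)
    {p q : C(Y, E)} (hpq : ∀ y, segment ℝ (p y) (q y) ⊆ S) {g₀ g₁ : C(Y, K)}
    (h₀ : ∀ y, g₀ y = r (p y)) (h₁ : ∀ y, g₁ y = r (q y)) : g₀.Homotopic g₁ :=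
  ⟨{ toFun := r ∘ Homotopy.affine p q
     continuous_toFun := hr.comp_continuous (Homotopy.affine p q).continuous fun x =>
       hpq x.2 (Path.range_segment (p x.2) (q x.2) ▸ mem_range_self x.1)
     map_zero_left := fun y => by simp [h₀]
     map_one_left := fun y => by simp [h₁] }⟩

end ContinuousMap

theorem Metric.exists_mem_ball_forall_le_two_mul {ι X : Type*} [PseudoMetricSpace X]
    {c : ι → X} {δ : ι → ℝ} (hδ : BddAbove (range δ)) {x : X}
    (hx : x ∈ ⋃ i, ball (c i) (δ i)) :
    ∃ j, x ∈ ball (c j) (δ j) ∧ ∀ i, x ∈ ball (c i) (δ i) → δ i ≤ 2 * δ j := by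
  obtain ⟨i₀, hi₀⟩ := mem_iUnion.1 hx
  set S := δ '' {i | x ∈ ball (c i) (δ i)}
  have hS : BddAbove S := hδ.mono (image_subset_range _ _)
  have hle : ∀ i, x ∈ ball (c i) (δ i) → δ i ≤ sSup S := fun i hi => le_csSup hS ⟨i, hi, rfl⟩
  have hpos : 0 < sSup S := (pos_of_mem_ball hi₀).trans_le (hle i₀ hi₀)
  obtain ⟨_, ⟨j, hj, rfl⟩, hjS⟩ :=
    exists_lt_of_lt_csSup (⟨_, i₀, hi₀, rfl⟩ : S.Nonempty) (half_lt_self hpos)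
  exact ⟨j, hj, fun i hi => by linarith [hle i hi]⟩

namespace BoundedContinuousFunction

variable (K : Type*) [PseudoMetricSpace K]

noncomputable def truncDist (k : K) : K →ᵇ ℝ :=
  mkOfBound ⟨fun x => min (dist x k) 1, by fun_prop⟩ 1 fun x y =>
    Real.dist_le_of_mem_Icc_01 ⟨le_min dist_nonneg zero_le_one, min_le_right _ _⟩
      ⟨le_min dist_nonneg zero_le_one, min_le_right _ _⟩

variable {K}

theorem truncDist_apply (k x : K) : truncDist K k x = min (dist x k) 1 := rfl

theorem truncDist_nonneg (k x : K) : 0 ≤ truncDist K k x := le_min dist_nonneg zero_le_one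

theorem dist_truncDist (k k' : K) :
    dist (truncDist K k) (truncDist K k') = min (dist k k') 1 := by
  refine le_antisymm ((dist_le (le_min dist_nonneg zero_le_one)).2 fun x => ?_) ?_
  · rw [truncDist_apply, truncDist_apply, Real.dist_eq]
    refine le_min ?_ (Real.dist_le_of_mem_Icc_01 ?_ ?_)
    · simpa [dist_comm x] using (abs_min_sub_min_le_max (dist x k) 1 (dist x k') 1).trans
        (by simpa [dist_comm x] using abs_dist_sub_le k k' x)
    all_goals exact ⟨le_min dist_nonneg zero_le_one, min_le_right _ _⟩
  · have := dist_coe_le_dist (f := truncDist K k) (g := truncDist K k') k'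
    rwa [truncDist_apply, truncDist_apply, dist_self, min_eq_left zero_le_one, Real.dist_eq,
      sub_zero, abs_of_nonneg (le_min dist_nonneg zero_le_one), dist_comm] at this

theorem exists_pos_mul_truncDist_le_of_mem_convexHull {z : K →ᵇ ℝ}
    (hz : z ∈ convexHull ℝ (range (truncDist K))) :
    ∃ k, ∃ c > 0, ∀ x, c * truncDist K k x ≤ z x := by
  suffices convexHull ℝ (range (truncDist K)) ⊆
      {z | (∀ x, 0 ≤ z x) ∧ ∃ k, ∃ c > 0, ∀ x, c * truncDist K k x ≤ z x} from (this hz).2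
  refine convexHull_min ?_ ?_
  · rintro _ ⟨k, rfl⟩
    exact ⟨truncDist_nonneg k, k, 1, one_pos, fun x => (one_mul _).le⟩
  · rintro z₁ ⟨hz₁, k₁, c₁, hc₁, h₁⟩ z₂ ⟨hz₂, k₂, c₂, hc₂, h₂⟩ a b ha hb hab
    simp only [mem_ofPred_eq, coe_add, coe_smul, Pi.add_apply, smul_eq_mul]
    refine ⟨fun x => add_nonneg (mul_nonneg ha (hz₁ x)) (mul_nonneg hb (hz₂ x)), ?_⟩
    rcases ha.eq_or_lt with rfl | ha
    · rw [zero_add] at hab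
      exact ⟨k₂, b * c₂, by simp [hab, hc₂], fun x => by nlinarith [h₂ x]⟩
    · exact ⟨k₁, a * c₁, mul_pos ha hc₁, fun x => by nlinarith [h₁ x, hz₂ x]⟩

theorem mem_range_truncDist_of_mem_closure {z : K →ᵇ ℝ}
    (hz : z ∈ convexHull ℝ (range (truncDist K))) (hcl : z ∈ closure (range (truncDist K))) :
    z ∈ range (truncDist K) := by
  obtain ⟨k, c, hc, hkz⟩ := exists_pos_mul_truncDist_le_of_mem_convexHull hz
  have hk : ∀ σ, c * dist (truncDist K σ) (truncDist K k) ≤ dist z (truncDist K σ) := by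
    intro σ
    calc c * dist (truncDist K σ) (truncDist K k) = c * truncDist K k σ := by
          rw [dist_truncDist, truncDist_apply]
      _ ≤ z σ := hkz σ
      _ ≤ dist (z σ) (truncDist K σ σ) := by
          rw [truncDist_apply, dist_self, min_eq_left zero_le_one, Real.dist_0_eq_abs]
          exact le_abs_self _
      _ ≤ dist z (truncDist K σ) := dist_coe_le_dist σ
  refine ⟨k, (eq_of_forall_dist_le fun ε hε => ?_).symm⟩
  obtain ⟨_, ⟨σ, rfl⟩, hσ⟩ := Metric.mem_closure_iff.1 hcl (ε * c / (c + 1)) (by positivity)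
  rw [lt_div_iff₀ (by positivity)] at hσ
  have := hk σ
  nlinarith [dist_triangle z (truncDist K σ) (truncDist K k)]

variable {K : Type*} [MetricSpace K]

theorem isEmbedding_truncDist : IsEmbedding (truncDist K) := by
  refine (Metric.isUniformEmbedding_iff'.2 ⟨fun ε hε => ⟨ε, hε, fun h => ?_⟩,
    fun δ hδ => ⟨min δ 1, lt_min hδ one_pos, fun h => ?_⟩⟩).isEmbedding
  · rw [dist_truncDist]; exact (min_le_left _ _).trans_lt h
  · rw [dist_truncDist] at h
    by_contra! hle
    exact (min_le_min_right 1 hle).not_gt h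

end BoundedContinuousFunction

theorem IsMetricANR.exists_continuousOn_retraction {K E : Type u} [TopologicalSpace K]
    [Nonempty K] [TopologicalSpace E] [TopologicalSpace.MetrizableSpace E] (hK : IsMetricANR K)
    {C : Set E} {e : K → E} (he : IsEmbedding e) (heC : range e ⊆ C)
    (hcl : C ∩ closure (range e) ⊆ range e) :
    ∃ O : Set E, IsOpen O ∧ range e ⊆ O ∧
      ∃ r : E → K, ContinuousOn r (C ∩ O) ∧ ∀ k, r (e k) = k := by
  classical
  set e' : K → C := codRestrict e C fun k => heC (mem_range_self k)
  have he' : IsClosedEmbedding e' := by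
    refine ⟨he.codRestrict C _, ?_⟩
    convert (isClosed_closure (s := range e)).preimage continuous_subtype_val
    refine Subset.antisymm ?_ fun z hz => ?_
    · rintro _ ⟨k, rfl⟩
      exact subset_closure (mem_range_self k)
    · obtain ⟨k, hk⟩ := hcl ⟨z.2, hz⟩
      exact ⟨k, Subtype.ext hk⟩
  obtain ⟨V, hV, heV, r₀, hr₀, hr₀e⟩ := hK.2 C inferInstance e' he'
  obtain ⟨O, hO, rfl⟩ := isOpen_induced_iff.1 hV
  choose R hR using hr₀
  have hRc : Continuous R :=
    he'.continuous_iff.2 (by simpa only [Function.comp_def, hR] using r₀.continuous)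
  refine ⟨O, hO, fun _ ⟨k, hk⟩ => hk ▸ heV (mem_range_self k),
    fun z => if h : z ∈ C ∧ z ∈ O then R ⟨⟨z, h.1⟩, h.2⟩ else Classical.arbitrary K, ?_, ?_⟩
  · have hι : Continuous fun z : ↥(C ∩ O) =>
        (⟨⟨z.1, z.2.1⟩, z.2.2⟩ : ↥((Subtype.val : C → E) ⁻¹' O)) := by fun_prop
    rw [continuousOn_iff_continuous_domRestrict]
    convert hRc.comp hι using 1
    funext z
    simp [z.2.1, z.2.2]
  · intro k
    have hk : e k ∈ C ∧ e k ∈ O := ⟨heC (mem_range_self k), heV (mem_range_self k)⟩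
    simp only [hk, and_self, dite_true]
    exact he'.injective ((hR _).trans (hr₀e k _))

theorem exists_isOpen_superset_continuousMap_mem_convex_inter_ball {X E : Type*} [MetricSpace X]
    [NormedAddCommGroup E] [NormedSpace ℝ E] {A : Set X} {C : Set E} (hC : Convex ℝ C)
    (F : C(A, E)) (hFC : ∀ a, F a ∈ C) (η : A → ℝ) (hη : ∀ a, 0 < η a) :
    ∃ U, IsOpen U ∧ A ⊆ U ∧ ∃ g : C(U, E), ∀ x : U, ∃ b : A,
      g x ∈ C ∩ ball (F b) (η b) ∧ ∀ hx : (x : X) ∈ A, F ⟨x, hx⟩ ∈ ball (F b) (η b) := by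
  have hδ : ∀ a : A, ∃ δ ∈ Ioc (0 : ℝ) 1,
      ∀ a' : A, dist (a' : X) a < 3 * δ → dist (F a') (F a) < η a := by
    intro a
    obtain ⟨δ₀, hδ₀, hF⟩ := Metric.continuousAt_iff.1 F.continuous.continuousAt (η a) (hη a)
    exact ⟨min (δ₀ / 3) 1, ⟨by positivity, min_le_right _ _⟩,
      fun a' ha' => hF (by rw [Subtype.dist_eq]; linarith [min_le_left (δ₀ / 3) 1])⟩
  choose δ hδ hδF using hδ
  set U := ⋃ a : A, ball (a : X) (δ a)
  have hb : ∀ x : U, ∃ b : A, (x : X) ∈ ball (b : X) (δ b) ∧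
      ∀ a : A, (x : X) ∈ ball (a : X) (δ a) → δ a ≤ 2 * δ b := fun x =>
    exists_mem_ball_forall_le_two_mul ⟨1, by rintro _ ⟨a, rfl⟩; exact (hδ a).2⟩ x.2
  choose b hbx hbmax using hb
  -- a center chosen for `x` is admissible for every nearby `y`, as `b y` has almost maximal radius
  have hnear : ∀ x y : U, (y : X) ∈ ball (b x : X) (δ (b x)) →
      dist (F (b x)) (F (b y)) < η (b y) := by
    intro x y hy
    refine hδF (b y) (b x) ?_
    calc dist (b x : X) (b y) ≤ dist (b x : X) y + dist (y : X) (b y) := dist_triangle _ _ _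
      _ < δ (b x) + δ (b y) := add_lt_add (by rwa [dist_comm]) (hbx y)
      _ ≤ 3 * δ (b y) := by linarith [hbmax y (b x) hy]
  obtain ⟨g, hg⟩ := exists_continuous_forall_mem_convex_of_local_const
    (t := fun x : U => C ∩ ball (F (b x)) (η (b x))) (fun x => hC.inter (convex_ball _ _))
    fun x => ⟨F (b x), by
      filter_upwards [(isOpen_ball.preimage continuous_subtype_val).mem_nhds (hbx x)] with y hy
      exact ⟨hFC _, hnear x y hy⟩⟩
  refine ⟨U, isOpen_iUnion fun a => isOpen_ball,
    fun x hx => mem_iUnion.2 ⟨⟨x, hx⟩, mem_ball_self (hδ _).1⟩, g,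
    fun x => ⟨b x, hg x, fun hx => hδF (b x) ⟨x, hx⟩ ?_⟩⟩
  linarith [mem_ball.1 (hbx x), (hδ (b x)).1]

/-- Modified Walsh Lemma. Let `X` be a metric space, `A ⊆ X`, `K` a metric
ANR, and `f : A → K` continuous. Then for any `ε : K → (0, ∞)` there is an open `U ⊇ A` and a
continuous `g : U → K` such that every `g u` is `ε`-close to some value `f a_u`, and the
restriction of `g` to `A` is homotopic to `f`. -/
theorem modified_walsh_lemma {X : Type u} [MetricSpace X] (A : Set X)
    {K : Type u} [MetricSpace K] (hK : IsMetricANR K)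
    (f : C(A, K)) (ε : K → ℝ) (hε : ∀ y, 0 < ε y) :
    ∃ (U : Set X) (hU : IsOpen U) (hAU : A ⊆ U) (g : C(U, K)),
      (∀ u : U, ∃ a : A, dist (g u) (f a) ≤ ε (f a)) ∧
      (g.comp ⟨Set.inclusion hAU, continuous_inclusion hAU⟩).Homotopic f := by
  rcases isEmpty_or_nonempty K with hK₀ | hK₀
  · have : IsEmpty A := ⟨fun a => isEmptyElim (f a)⟩
    refine ⟨∅, isOpen_empty, fun x hx => isEmptyElim (⟨x, hx⟩ : A),
      ⟨isEmptyElim, continuous_of_discreteTopology⟩, isEmptyElim, ?_⟩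
    exact Subsingleton.elim (α := C(A, K)) _ f ▸ .refl f
  set e := BoundedContinuousFunction.truncDist K
  set C := convexHull ℝ (range e)
  have he : IsEmbedding e := BoundedContinuousFunction.isEmbedding_truncDist
  set F : C(A, _) := ⟨e ∘ f, he.continuous.comp f.continuous⟩
  obtain ⟨O, hO, heO, r, hr, hre⟩ := hK.exists_continuousOn_retraction he
    (subset_convexHull ℝ _) fun z hz =>
    BoundedContinuousFunction.mem_range_truncDist_of_mem_closure hz.1 hz.2
  have hρ : ∀ k, ∃ ρ > 0, ∀ z ∈ C ∩ ball (e k) ρ, z ∈ C ∩ O ∧ dist (r z) k < ε k := by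
    intro k
    have hek : e k ∈ C ∩ O := ⟨subset_convexHull ℝ _ (mem_range_self k), heO (mem_range_self k)⟩
    have hO' : O ∈ 𝓝[C] (e k) := mem_nhdsWithin_of_mem_nhds (hO.mem_nhds hek.2)
    have hr' : r ⁻¹' ball k (ε k) ∈ 𝓝[C] (e k) := by
      rw [← nhdsWithin_inter_of_mem' hO']
      exact (hr _ hek).preimage_mem_nhdsWithin (by rw [hre]; exact ball_mem_nhds k (hε k))
    obtain ⟨ρ, hρ, hsub⟩ := Metric.mem_nhdsWithin_iff.1 (Filter.inter_mem hO' hr')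
    exact ⟨ρ, hρ, fun z hz => ⟨⟨hz.1, (hsub ⟨hz.2, hz.1⟩).1⟩, (hsub ⟨hz.2, hz.1⟩).2⟩⟩
  choose ρ hρ0 hρ using hρ
  obtain ⟨U, hU, hAU, g₀, hg₀⟩ := exists_isOpen_superset_continuousMap_mem_convex_inter_ball
    (convex_convexHull ℝ _) F (fun a => subset_convexHull ℝ _ (mem_range_self (f := e) (f a)))
    (fun a => ρ (f a)) (fun a => hρ0 _)
  choose b hg₀b hFb using hg₀
  refine ⟨U, hU, hAU, ⟨r ∘ g₀, hr.comp_continuous g₀.continuous fun x => (hρ _ _ (hg₀b x)).1⟩,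
    fun x => ⟨b x, (hρ _ _ (hg₀b x)).2.le⟩, ?_⟩
  refine ContinuousMap.Homotopic.of_segment_subset hr
    (p := g₀.comp ⟨inclusion hAU, continuous_inclusion hAU⟩) (q := F)
    (fun a => ?_) (fun _ => rfl) (fun a => (hre _).symm)
  exact (((convex_convexHull ℝ _).inter (convex_ball _ _)).segment_subset (hg₀b _)
    ⟨subset_convexHull ℝ _ (mem_range_self _), hFb _ a.2⟩).trans fun z hz => (hρ _ z hz).1
end

section
/- Let K be a metric ANR. Then there exists a function ε : K → (0,∞) (not necessarily continuous) such that for every metric space X and all continuous maps f, g : X → K that are W-close with respect to the cover W = {B(y, ε(y)) : y ∈ K} — that is, for every x ∈ X there exists y ∈ K with d(f(x), y) < ε(y) and d(g(x), y) < ε(y) — the maps f and g are homotopic. -/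
/-!
Embed `K` isometrically into the bounded continuous functions `K →ᵇ ℝ` by the Kuratowski map
`x ↦ dist x · - dist x₀ ·`. Its image is closed in its convex hull `C`
(Kuratowski–Wojdysławski), so the ANR property yields an open neighbourhood `U` of `K` in `C`
with a retraction `ρ : U → K`. Choose `ε y` so that the ball of radius `ε y` about `y` in `C` lies
in `U`. If `f x` and `g x` both lie in `B(y, ε y)`, so does the whole segment between them, since
balls and `C` are convex. Hence the straight-line homotopy from `f` to `g` in `C` stays in `U`,
and composing it with `ρ` gives a homotopy from `f` to `g` in `K`.
-/

universe u v

open Set Metric Topology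
open scoped BoundedContinuousFunction

section

variable {K : Type*} [PseudoMetricSpace K]

noncomputable def kuratowskiMap (x₀ x : K) : K →ᵇ ℝ :=
  .mkOfBound ⟨fun z => dist x z - dist x₀ z, by fun_prop⟩ (2 * dist x x₀) fun a b => by
    rw [Real.dist_eq, two_mul]
    exact (abs_sub _ _).trans (add_le_add (abs_dist_sub_le x x₀ a) (abs_dist_sub_le x x₀ b))

@[simp]
theorem kuratowskiMap_apply (x₀ x z : K) : kuratowskiMap x₀ x z = dist x z - dist x₀ z := rfl

theorem isometry_kuratowskiMap (x₀ : K) : Isometry (kuratowskiMap x₀) := by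
  refine Isometry.of_dist_eq fun x y => le_antisymm ?_ ?_
  · refine (BoundedContinuousFunction.dist_le dist_nonneg).2 fun z => ?_
    rw [Real.dist_eq, kuratowskiMap_apply, kuratowskiMap_apply, sub_sub_sub_cancel_right]
    exact abs_dist_sub_le x y z
  · have h := BoundedContinuousFunction.dist_coe_le_dist (f := kuratowskiMap x₀ x)
      (g := kuratowskiMap x₀ y) y
    rwa [Real.dist_eq, kuratowskiMap_apply, kuratowskiMap_apply, sub_sub_sub_cancel_right,
      dist_self, sub_zero, abs_of_nonneg dist_nonneg] at h

/-- A convex combination `v = ∑ wⱼ • kuratowskiMap x₀ xⱼ` satisfies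
`v y + dist x₀ y = ∑ wⱼ * dist xⱼ y ≥ wᵢ * dist xᵢ y` for every `i`. -/
theorem exists_mul_dist_le_dist_kuratowskiMap {x₀ : K} {v : K →ᵇ ℝ}
    (hv : v ∈ convexHull ℝ (range (kuratowskiMap x₀))) :
    ∃ x, ∃ c > (0 : ℝ), ∀ y, c * dist x y ≤ dist (kuratowskiMap x₀ y) v := by
  obtain ⟨ι, _, w, z, hw₀, hw₁, hz, rfl⟩ := mem_convexHull_iff_exists_fintype.1 hv
  choose p hp using hz
  obtain ⟨i, -, hi⟩ : ∃ i ∈ Finset.univ, 0 < w i := by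
    by_contra! h
    linarith [Finset.sum_nonpos h]
  refine ⟨p i, w i, hi, fun y => ?_⟩
  have hsum : ∑ j, w j * dist (p j) y = (∑ j, w j • z j) y + dist x₀ y := by
    simp only [BoundedContinuousFunction.coe_sum, BoundedContinuousFunction.coe_smul,
      Finset.sum_apply, smul_eq_mul, ← hp, kuratowskiMap_apply]
    simp only [mul_sub, Finset.sum_sub_distrib, ← Finset.sum_mul, hw₁]
    ring
  calc w i * dist (p i) y ≤ ∑ j, w j * dist (p j) y :=
        Finset.single_le_sum (fun j _ => mul_nonneg (hw₀ j) dist_nonneg) (Finset.mem_univ i)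
    _ = (∑ j, w j • z j) y - kuratowskiMap x₀ y y := by
        rw [hsum, kuratowskiMap_apply, dist_self]; ring
    _ ≤ dist (kuratowskiMap x₀ y) (∑ j, w j • z j) := by
        rw [dist_comm]
        exact (le_abs_self _).trans
          ((Real.dist_eq _ _).symm.trans_le (BoundedContinuousFunction.dist_coe_le_dist y))

theorem mem_range_kuratowskiMap_of_mem_closure {x₀ : K} {v : K →ᵇ ℝ}
    (hv : v ∈ convexHull ℝ (range (kuratowskiMap x₀)))
    (hcl : v ∈ closure (range (kuratowskiMap x₀))) : v ∈ range (kuratowskiMap x₀) := by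
  obtain ⟨x, c, hc, hx⟩ := exists_mul_dist_le_dist_kuratowskiMap hv
  have hne : (range (kuratowskiMap x₀)).Nonempty := range_nonempty_iff_nonempty.2 ⟨x⟩
  have hle : dist (kuratowskiMap x₀ x) v / (1 + c⁻¹) ≤ infDist v (range (kuratowskiMap x₀)) := by
    refine (le_infDist hne).2 ?_
    rintro _ ⟨y, rfl⟩
    rw [div_le_iff₀ (by positivity), dist_comm v]
    calc dist (kuratowskiMap x₀ x) v
        ≤ dist (kuratowskiMap x₀ x) (kuratowskiMap x₀ y) + dist (kuratowskiMap x₀ y) v :=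
          dist_triangle _ _ _
      _ ≤ c⁻¹ * dist (kuratowskiMap x₀ y) v + dist (kuratowskiMap x₀ y) v := by
          gcongr
          rw [(isometry_kuratowskiMap x₀).dist_eq, le_inv_mul_iff₀ hc]
          exact hx y
      _ = _ := by ring
  rw [(mem_closure_iff_infDist_zero hne).1 hcl, div_le_iff₀ (by positivity), zero_mul] at hle
  exact ⟨x, dist_le_zero.1 hle⟩

end

section

variable {K : Type*} [MetricSpace K]

noncomputable def kuratowskiHullEmbedding (x₀ : K) :
    K → convexHull ℝ (range (kuratowskiMap x₀)) :=
  codRestrict (kuratowskiMap x₀) _ fun x => subset_convexHull ℝ _ (mem_range_self x)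

theorem isometry_kuratowskiHullEmbedding (x₀ : K) : Isometry (kuratowskiHullEmbedding x₀) :=
  fun x y => isometry_kuratowskiMap x₀ x y

theorem isClosedEmbedding_kuratowskiHullEmbedding (x₀ : K) :
    IsClosedEmbedding (kuratowskiHullEmbedding x₀) := by
  refine ⟨(isometry_kuratowskiHullEmbedding x₀).isEmbedding, ?_⟩
  have : range (kuratowskiHullEmbedding x₀) = (↑) ⁻¹' closure (range (kuratowskiMap x₀)) := by
    refine Subset.antisymm ?_ fun v hv => ?_
    · rintro _ ⟨x, rfl⟩
      exact subset_closure (mem_range_self x)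
    · obtain ⟨x, hx⟩ := mem_range_kuratowskiMap_of_mem_closure v.2 hv
      exact ⟨x, Subtype.ext hx⟩
  rw [this]
  exact isClosed_closure.preimage continuous_subtype_val

end

theorem IsMetricANR.exists_retraction {K Z : Type u} [TopologicalSpace K] [TopologicalSpace Z]
    [TopologicalSpace.MetrizableSpace Z] (hK : IsMetricANR K) {e : K → Z}
    (he : IsClosedEmbedding e) :
    ∃ U : Set Z, IsOpen U ∧ range e ⊆ U ∧ ∃ ρ : C(U, K), ∀ k (hk : e k ∈ U), ρ ⟨e k, hk⟩ = k := by
  obtain ⟨U, hU, heU, r, hr, hre⟩ := hK.2 Z ‹_› e he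
  refine ⟨U, hU, heU, ⟨fun u => he.isEmbedding.toHomeomorph.symm ⟨r u, hr u⟩, by fun_prop⟩,
    fun k hk => ?_⟩
  simp only [ContinuousMap.coe_mk, hre k hk, IsEmbedding.toHomeomorph_symm_apply]

section Homotopy

variable {X E : Type*} [TopologicalSpace X]

theorem ContinuousMap.Homotopic.of_segment_subset_range [AddCommGroup E] [TopologicalSpace E]
    [IsTopologicalAddGroup E] [Module ℝ E] [ContinuousSMul ℝ E] {S : Type*} [TopologicalSpace S]
    {i : S → E} (hi : IsEmbedding i) {f g : C(X, S)}
    (h : ∀ x, segment ℝ (i (f x)) (i (g x)) ⊆ range i) : f.Homotopic g := by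
  let I : C(S, E) := ⟨i, hi.continuous⟩
  let A := ContinuousMap.Homotopy.affine (I.comp f) (I.comp g)
  have hA : ∀ q, A q ∈ range i := fun q => h q.2 <| by
    rw [segment_eq_image_lineMap]
    exact mem_image_of_mem _ q.1.2
  exact ⟨{
    toFun q := hi.toHomeomorph.symm ⟨A q, hA q⟩
    continuous_toFun := by fun_prop
    map_zero_left x := by simp [A, I]
    map_one_left x := by simp [A, I] }⟩

theorem ContinuousMap.Homotopic.of_forall_ball_subset {K : Type*} [PseudoMetricSpace K]
    [SeminormedAddCommGroup E] [NormedSpace ℝ E] {C : Set E} (hC : Convex ℝ C) {e : K → C}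
    (he : Isometry e) {U : Set C} (ρ : C(U, K)) (hρ : ∀ k (hk : e k ∈ U), ρ ⟨e k, hk⟩ = k)
    {ε : K → ℝ} (hε : ∀ y, ball (e y) (ε y) ⊆ U) {f g : C(X, K)}
    (hfg : ∀ x, ∃ y, dist (f x) y < ε y ∧ dist (g x) y < ε y) : f.Homotopic g := by
  choose y hfy hgy using hfg
  have hU : ∀ k x, dist k (y x) < ε (y x) → e k ∈ U := fun k x h =>
    hε (y x) (by rwa [mem_ball, he.dist_eq])
  let f' : C(X, U) := ⟨fun x => ⟨e (f x), hU _ x (hfy x)⟩,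
    (he.continuous.comp f.continuous).subtype_mk _⟩
  let g' : C(X, U) := ⟨fun x => ⟨e (g x), hU _ x (hgy x)⟩,
    (he.continuous.comp g.continuous).subtype_mk _⟩
  have hf'g' : f'.Homotopic g' := by
    refine .of_segment_subset_range (IsEmbedding.subtypeVal.comp IsEmbedding.subtypeVal)
      fun x z hz => ?_
    have hzC : z ∈ C := hC.segment_subset (e (f x)).2 (e (g x)).2 hz
    have hzB : z ∈ ball (e (y x) : E) (ε (y x)) := (convex_ball _ _).segment_subset
      (show dist (e (f x)) (e (y x)) < _ by rw [he.dist_eq]; exact hfy x)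
      (show dist (e (g x)) (e (y x)) < _ by rw [he.dist_eq]; exact hgy x) hz
    exact ⟨⟨⟨z, hzC⟩, hε _ hzB⟩, rfl⟩
  have hρf : ρ.comp f' = f := ContinuousMap.ext fun x => hρ _ _
  have hρg : ρ.comp g' = g := ContinuousMap.ext fun x => hρ _ _
  exact hρf ▸ hρg ▸ (ContinuousMap.Homotopic.refl ρ).comp hf'g'

end Homotopy

/-- For every metric ANR `K` there is a function `ε : K → (0, ∞)` such that
any two continuous maps `f, g : X → K` from a metric space `X` that are `W`-close with respect
to the cover `W = {B(y, ε y) : y ∈ K}` are homotopic. -/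
theorem exists_epsilon_homotopy {K : Type u} [MetricSpace K] (hK : IsMetricANR K) :
    ∃ ε : K → ℝ, (∀ y, 0 < ε y) ∧
      ∀ (X : Type v) [MetricSpace X] (f g : C(X, K)),
        (∀ x : X, ∃ y : K, dist (f x) y < ε y ∧ dist (g x) y < ε y) →
        f.Homotopic g := by
  rcases isEmpty_or_nonempty K with _ | ⟨⟨x₀⟩⟩
  · refine ⟨fun _ => 1, fun _ => one_pos, fun X _ f g _ => ?_⟩
    obtain rfl : f = g := ContinuousMap.ext fun x => isEmptyElim (f x)
    exact .refl f
  · obtain ⟨U, hU, heU, ρ, hρ⟩ :=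
      hK.exists_retraction (isClosedEmbedding_kuratowskiHullEmbedding x₀)
    choose ε hε₀ hεU using fun y => isOpen_iff.1 hU _ (heU (mem_range_self y))
    exact ⟨ε, hε₀, fun X _ f g hfg => .of_forall_ball_subset (convex_convexHull ℝ _)
      (isometry_kuratowskiHullEmbedding x₀) ρ hρ hεU hfg⟩
end
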